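/- arXiv:2404.04961 — 2 statements merged into one kernel-verified Lean document; each statement's English description precedes it below -/
import Mathlib

section
/- Let (W,S) be a Coxeter system and let I ⊆ S. If X is a subset of the left descent class D_I = {x ∈ W : Des(x) = I}, then X is ascent-compatible: for all u, v ∈ X and s, t ∈ S such that s is a left ascent of u, t is a left ascent of v, and u⁻¹su = v⁻¹tv, we have su ∈ X if and only if tv ∈ X. -/
/-- A subset `X` of a Coxeter group is *ascent-compatible* if for all `u, v ∈ X` and simple
generators `s, t` such that `s` is a left ascent of `u`, `t` is a left ascent of `v`, and
`u⁻¹su = v⁻¹tv`, we have `su ∈ X ↔ tv ∈ X`. -/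
def CoxeterSystem.AscentCompatible {B W : Type*} [Group W] {M : CoxeterMatrix B}
    (cs : CoxeterSystem M W) (X : Set W) : Prop :=
  ∀ u ∈ X, ∀ v ∈ X, ∀ s t : B,
    ¬ cs.IsLeftDescent u s → ¬ cs.IsLeftDescent v t →
    u⁻¹ * cs.simple s * u = v⁻¹ * cs.simple t * v →
    (cs.simple s * u ∈ X ↔ cs.simple t * v ∈ X)

private lemma ascent_mul_not_mem {B W : Type*} [Group W] {M : CoxeterMatrix B}
    (cs : CoxeterSystem M W) (I : Set B) (X : Set W)
    (hX : X ⊆ {w : W | ∀ i : B, cs.IsLeftDescent w i ↔ i ∈ I})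
    {u : W} {s : B} (hu : u ∈ X) (hs : ¬ cs.IsLeftDescent u s) :
    cs.simple s * u ∉ X := by
  intro hmem
  have h1 : cs.IsLeftDescent (cs.simple s * u) s := by
    rw [cs.isLeftDescent_iff_not_isLeftDescent_mul] at hs
    simpa using hs
  have hsI : s ∈ I := (hX hmem s).mp h1
  exact hs ((hX hu s).mpr hsI)

/-- Any subset of a left descent class `D_I = {x ∈ W : Des(x) = I}` is ascent-compatible. -/
theorem subset_leftDescentClass_ascentCompatible
    {B W : Type*} [Group W] {M : CoxeterMatrix B} (cs : CoxeterSystem M W)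
    (I : Set B) (X : Set W)
    (hX : X ⊆ {w : W | ∀ i : B, cs.IsLeftDescent w i ↔ i ∈ I}) :
    cs.AscentCompatible X := by
  intro u hu v hv s t hs ht _
  constructor
  · intro h; exact absurd h (ascent_mul_not_mem cs I X hX hu hs)
  · intro h; exact absurd h (ascent_mul_not_mem cs I X hX hv ht)
end

section
/- If σ ∈ B_n is a signed arc permutation, then for each q ∈ {1,...,n}, the set {|σ(j)| : 1 ≤ j ≤ q} of absolute values of the first q entries of the one-line notation of σ is a cyclic interval modulo n. -/
/-- The hyperoctahedral group `B_n`, realized as the group of permutations `σ` of `ℤ`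
satisfying `σ(-j) = -σ(j)` for all `j` and fixing every `j` with `|j| > n`
(so `σ` permutes `{±1, ..., ±n}`). -/
def SignedPermGroup (n : ℕ) : Subgroup (Equiv.Perm ℤ) where
  carrier := {σ | (∀ j : ℤ, σ (-j) = -σ j) ∧ (∀ j : ℤ, (n : ℤ) < |j| → σ j = j)}
  one_mem' := by constructor <;> intro j <;> simp
  mul_mem' := by
    rintro σ τ ⟨hσ1, hσ2⟩ ⟨hτ1, hτ2⟩
    constructor
    · intro j
      simp only [Equiv.Perm.mul_apply, hτ1, hσ1]
    · intro j hj
      simp only [Equiv.Perm.mul_apply, hτ2 j hj, hσ2 j hj]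
  inv_mem' := by
    rintro σ ⟨h1, h2⟩
    constructor
    · intro j
      apply σ.injective
      rw [Equiv.Perm.inv_def, Equiv.apply_symm_apply, h1, Equiv.apply_symm_apply]
    · intro j hj
      apply σ.injective
      rw [Equiv.Perm.inv_def, Equiv.apply_symm_apply, h2 j hj]

/-- The simple generator `s_i` of `B_n` as a permutation of `ℤ`: `s_0` swaps `1 ↔ -1`;
for `i ≥ 1`, `s_i` swaps `i ↔ i+1` and `-i ↔ -(i+1)`. -/
def bSimplePerm (i : ℕ) : Equiv.Perm ℤ :=
  if i = 0 then Equiv.swap 1 (-1)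
  else Equiv.swap (i : ℤ) ((i : ℤ) + 1) * Equiv.swap (-(i : ℤ)) (-((i : ℤ) + 1))

theorem bSimplePerm_mem (n : ℕ) (i : ℕ) (hi : i < n) :
    bSimplePerm i ∈ SignedPermGroup n := by
  have hn : (0 : ℤ) < (n : ℤ) := by exact_mod_cast Nat.pos_of_ne_zero (by omega)
  constructor
  · intro j
    by_cases h0 : i = 0
    · subst h0
      simp only [bSimplePerm, reduceIte, Equiv.swap_apply_def]
      split_ifs <;> omega
    · have hipos : (1 : ℤ) ≤ (i : ℤ) := by exact_mod_cast Nat.one_le_iff_ne_zero.2 h0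
      simp only [bSimplePerm, if_neg h0, Equiv.Perm.mul_apply, Equiv.swap_apply_def]
      split_ifs <;> omega
  · intro j hj
    have hj' : (n : ℤ) < j ∨ j < -(n : ℤ) := by rcases abs_cases j with ⟨h, _⟩ | ⟨h, _⟩ <;> omega
    by_cases h0 : i = 0
    · subst h0
      simp only [bSimplePerm, reduceIte, Equiv.swap_apply_def]
      split_ifs <;> omega
    · have hipos : (1 : ℤ) ≤ (i : ℤ) := by exact_mod_cast Nat.one_le_iff_ne_zero.2 h0
      have hile : (i : ℤ) < (n : ℤ) := by exact_mod_cast hi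
      simp only [bSimplePerm, if_neg h0, Equiv.Perm.mul_apply, Equiv.swap_apply_def]
      split_ifs <;> omega

/-- The simple generator `s_i` as an element of `B_n`. -/
def bSimple (n : ℕ) (i : Fin n) : SignedPermGroup n :=
  ⟨bSimplePerm i, bSimplePerm_mem n i i.2⟩

/-- The Coxeter length of an element of `B_n`: the minimal length of a word in the
simple generators `s_0, ..., s_{n-1}` representing it. -/
noncomputable def blength {n : ℕ} (x : SignedPermGroup n) : ℕ :=
  sInf {m | ∃ l : List (Fin n), l.length = m ∧ (l.map (bSimple n)).prod = x}

/-- The one-line notation `w(1), w(2), ..., w(n)` of a signed permutation. -/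
def oneLine (n : ℕ) (σ : SignedPermGroup n) : List ℤ :=
  (List.range n).map (fun k => (σ : Equiv.Perm ℤ) ((k : ℤ) + 1))

/-- A signed permutation is a *signed arc permutation* if its one-line notation is a shuffle of
a word over `{1,...,n}` and a word over `{-1,...,-n}`, each increasing by `1` modulo `n` at
every step, whose first letters `a₁, b₁` (when both words are nonempty) satisfy
`a₁ ≡ -b₁ + 1 (mod n)`. -/
def IsSignedArc (n : ℕ) (σ : SignedPermGroup n) : Prop :=
  List.Chain' (fun x y : ℤ => ((y : ZMod n) = (x : ZMod n) + 1))
      ((oneLine n σ).filter (fun x => decide (0 < x))) ∧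
  List.Chain' (fun x y : ℤ => ((y : ZMod n) = (x : ZMod n) + 1))
      ((oneLine n σ).filter (fun x => decide (x < 0))) ∧
  (∀ a ∈ ((oneLine n σ).filter (fun x => decide (0 < x))).head?,
   ∀ b ∈ ((oneLine n σ).filter (fun x => decide (x < 0))).head?,
      ((a : ZMod n) = -(b : ZMod n) + 1))

/-- A finite set `J ⊆ ℤ` with `q` elements is a *cyclic interval modulo `n`* if there are `q`
consecutive integers congruent modulo `n` to the elements of `J`. -/
def IsCyclicInterval (n : ℕ) (J : Finset ℤ) : Prop :=
  ∃ a : ℤ, ∃ e : {x // x ∈ Finset.Ico a (a + (J.card : ℤ))} ≃ {x // x ∈ J},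
    ∀ x : {x // x ∈ Finset.Ico a (a + (J.card : ℤ))}, (((x : ℤ)) : ZMod n) = (((e x : ℤ)) : ZMod n)

/-! The positive entries `a₁, …, aₚ` of a prefix of length `q` of a signed arc permutation run
upward from `a₁` modulo `n`, and the negative entries `b₁, …, bₜ` run upward from `b₁`, so their
absolute values run downward from `-b₁`. The condition `a₁ ≡ -b₁ + 1` glues the two runs into the
single run `-b₁ - t + 1, …, -b₁, a₁, …, a₁ + p - 1` of `q` consecutive residues. The `q` absolute
values are distinct and `q ≤ n`, so they are in bijection with this run. -/

open Finset

theorem isCyclicInterval_of_forall_exists_intCast_eq {n : ℕ} {J : Finset ℤ} (a : ℤ) (hJ : #J ≤ n)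
    (hcover : ∀ k : ℕ, k < #J → ∃ y ∈ J, (y : ZMod n) = a + k) : IsCyclicInterval n J := by
  have key : ∀ x : Ico a (a + #J), ∃ y : J, ((x : ℤ) : ZMod n) = y := by
    rintro ⟨x, hx⟩
    have hx' := mem_Ico.1 hx
    obtain ⟨y, hy, hyx⟩ := hcover (x - a).toNat (by omega)
    have htoNat : ((x - a).toNat : ℤ) = x - a := Int.toNat_of_nonneg (by omega)
    refine ⟨⟨y, hy⟩, ?_⟩
    change (x : ZMod n) = y
    rw [hyx, ← Int.cast_natCast, htoNat, ← Int.cast_add, add_sub_cancel]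
  choose g hg using key
  have hg_inj : Function.Injective g := by
    rintro ⟨x, hx⟩ ⟨y, hy⟩ hxy
    have hdvd : (n : ℤ) ∣ y - x :=
      (ZMod.intCast_eq_intCast_iff_dvd_sub _ _ _).1 (by rw [hg ⟨x, hx⟩, hxy, ← hg ⟨y, hy⟩])
    rw [mem_Ico] at hx hy
    have := Int.eq_zero_of_abs_lt_dvd hdvd (by rw [abs_lt]; omega)
    exact Subtype.ext (show x = y by omega)
  exact ⟨a, .ofBijective g ((Fintype.bijective_iff_injective_and_card g).2 ⟨hg_inj, by simp⟩), hg⟩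

theorem List.IsChain.apply_getElem_eq_add {α M : Type*} [AddMonoidWithOne M] {f : α → M}
    {l : List α} (hl : l.IsChain (fun x y => f y = f x + 1)) (i : ℕ) (hi : i < l.length) :
    f l[i] = f (l[0]'(by omega)) + i := by
  induction i with
  | zero => simp
  | succ i ih => rw [hl.getElem i hi, ih (by omega), Nat.cast_succ, add_assoc]

theorem List.IsPrefix.mem_head? {α : Type*} {l₁ l₂ : List α} (h : l₁ <+: l₂) {a : α}
    (ha : a ∈ l₁.head?) : a ∈ l₂.head? := by
  obtain ⟨r, rfl⟩ := h
  cases l₁ <;> simp_all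

def IsArcWord (n : ℕ) (l : List ℤ) : Prop :=
  (l.filter (0 < ·)).IsChain (fun x y : ℤ => (y : ZMod n) = x + 1) ∧
  (l.filter (· < 0)).IsChain (fun x y : ℤ => (y : ZMod n) = x + 1) ∧
  ∀ a ∈ (l.filter (0 < ·)).head?, ∀ b ∈ (l.filter (· < 0)).head?, (a : ZMod n) = -b + 1

theorem isSignedArc_iff_isArcWord {n : ℕ} {σ : SignedPermGroup n} :
    IsSignedArc n σ ↔ IsArcWord n (oneLine n σ) := Iff.rfl

namespace IsArcWord

variable {n : ℕ} {l : List ℤ}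

theorem of_prefix {l' : List ℤ} (hl : IsArcWord n l) (h : l' <+: l) : IsArcWord n l' :=
  ⟨hl.1.prefix (h.filter _), hl.2.1.prefix (h.filter _),
    fun a ha b hb => hl.2.2 a ((h.filter _).mem_head? ha) b ((h.filter _).mem_head? hb)⟩

theorem exists_intCast_abs_eq_add (hl : IsArcWord n l) (h0 : ∀ x ∈ l, x ≠ 0) :
    ∃ a : ℤ, ∀ k < l.length, ∃ x ∈ l, ((|x| : ℤ) : ZMod n) = a + k := by
  obtain ⟨hP, hN, hlink⟩ := hl
  set P := l.filter (0 < ·)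
  set N := l.filter (· < 0)
  have hlen : l.length = P.length + N.length := by
    rw [List.length_eq_length_filter_add (0 < ·)]
    congr 2
    refine List.filter_congr fun x hx => ?_
    rcases (h0 x hx).lt_or_gt with hx0 | hx0 <;> simp [hx0, lt_asymm hx0]
  have hPmem : ∀ i (hi : i < P.length), P[i] ∈ l ∧ 0 < P[i] := fun i hi => by
    simpa using List.mem_filter.1 (List.getElem_mem hi)
  have hNmem : ∀ i (hi : i < N.length), N[i] ∈ l ∧ N[i] < 0 := fun i hi => by
    simpa using List.mem_filter.1 (List.getElem_mem hi)
  have hPcast := hP.apply_getElem_eq_add (f := ((↑) : ℤ → ZMod n))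
  have hNcast := hN.apply_getElem_eq_add (f := ((↑) : ℤ → ZMod n))
  obtain hN0 | hN0 := Nat.eq_zero_or_pos N.length
  · obtain hP0 | hP0 := Nat.eq_zero_or_pos P.length
    · exact ⟨0, fun k hk => by omega⟩
    refine ⟨P[0], fun k hk => ⟨P[k], (hPmem k (by omega)).1, ?_⟩⟩
    rw [abs_of_pos (hPmem k _).2, hPcast]
  refine ⟨1 - N[0] - N.length, fun k hk => ?_⟩
  obtain hkN | hkN := lt_or_ge k N.length
  · obtain ⟨j, hj⟩ := Nat.exists_eq_add_of_lt hkN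
    refine ⟨N[j], (hNmem j (by omega)).1, ?_⟩
    rw [abs_of_neg (hNmem j _).2, Int.cast_neg, hNcast]
    push_cast [hj]
    ring
  · obtain ⟨j, rfl⟩ := Nat.exists_eq_add_of_le hkN
    have hP0 : 0 < P.length := by omega
    have hPN : (P[0] : ZMod n) = -N[0] + 1 :=
      hlink _ (by simp [List.head?_eq_getElem?, hP0]) _ (by simp [List.head?_eq_getElem?, hN0])
    refine ⟨P[j], (hPmem j (by omega)).1, ?_⟩
    rw [abs_of_pos (hPmem j _).2, hPcast, hPN]
    push_cast
    ring

end IsArcWord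

namespace SignedPermGroup

variable {n : ℕ} (σ : SignedPermGroup n)

theorem apply_ne_zero {j : ℤ} (hj : j ≠ 0) : (σ : Equiv.Perm ℤ) j ≠ 0 := by
  have hσ0 : (σ : Equiv.Perm ℤ) 0 = 0 := by
    have := σ.2.1 0
    rw [neg_zero] at this
    omega
  exact fun h => hj (σ.1.injective (h.trans hσ0.symm))

theorem abs_apply_injOn : Set.InjOn (fun j => |(σ : Equiv.Perm ℤ) j|) (Set.Ioi 0) := by
  intro i hi j hj hij
  rcases abs_eq_abs.1 hij with h | h
  · exact σ.1.injective h
  · have := σ.1.injective (h.trans (σ.2.1 j).symm)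
    simp only [Set.mem_Ioi] at hi hj
    omega

theorem take_oneLine {q : ℕ} (hq : q ≤ n) :
    (oneLine n σ).take q = (List.range q).map (fun j : ℕ => (σ : Equiv.Perm ℤ) (j + 1)) := by
  -- `oneLine` elaborates `List.range n` as a `List ℤ` through the list monad, hence `flatMap`.
  simp [oneLine, ← List.map_eq_flatMap, ← List.map_take, List.take_range, min_eq_left hq]

end SignedPermGroup

theorem signedArc_prefix_cyclicInterval_general (n : ℕ) (σ : SignedPermGroup n)
    (h : IsSignedArc n σ) (q : ℕ) (hqn : q ≤ n) :
    IsCyclicInterval n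
      ((Finset.range q).image (fun j : ℕ => |(σ : Equiv.Perm ℤ) ((j : ℤ) + 1)|)) := by
  have hcard : #((range q).image fun j : ℕ => |(σ : Equiv.Perm ℤ) ((j : ℤ) + 1)|) = q := by
    refine (card_image_of_injOn fun i _ j _ hij => ?_).trans (card_range q)
    have := SignedPermGroup.abs_apply_injOn σ (show (0 : ℤ) < i + 1 by positivity)
      (show (0 : ℤ) < j + 1 by positivity) hij
    omega
  have hword := (isSignedArc_iff_isArcWord.1 h).of_prefix (List.take_prefix q _)
  rw [SignedPermGroup.take_oneLine σ hqn] at hword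
  obtain ⟨a, ha⟩ := hword.exists_intCast_abs_eq_add (by
    simp only [List.mem_map, List.mem_range, forall_exists_index, and_imp]
    rintro _ j - rfl
    exact SignedPermGroup.apply_ne_zero σ (by omega))
  refine isCyclicInterval_of_forall_exists_intCast_eq a (hcard.le.trans hqn) fun k hk => ?_
  obtain ⟨_, hx, hxa⟩ := ha k (by simpa [hcard] using hk)
  obtain ⟨j, hj, rfl⟩ := List.mem_map.1 hx
  exact ⟨_, mem_image_of_mem _ (by simpa using hj), hxa⟩

/-- If `σ ∈ B_n` is a signed arc permutation, then for each `q ∈ {1,...,n}` the set of absolute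
values of the first `q` entries of the one-line notation of `σ` is a cyclic interval mod `n`. -/
theorem signedArc_prefix_cyclicInterval (n : ℕ) (σ : SignedPermGroup n)
    (h : IsSignedArc n σ) (q : ℕ) (hq1 : 1 ≤ q) (hqn : q ≤ n) :
    IsCyclicInterval n
      ((Finset.range q).image (fun j : ℕ => |(σ : Equiv.Perm ℤ) ((j : ℤ) + 1)|)) :=
  signedArc_prefix_cyclicInterval_general n σ h q hqn
end
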